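/- arXiv:1308.2860 — 5 statements merged into one kernel-verified Lean document; each statement's English description precedes it below -/
import Mathlib

section
/- Let f : ℝ^m → ℝ^m be a continuous open mapping and U ⊂ ℝ^m a bounded open set. Then f(T(U)) ⊆ T(f(U)), where T(E) denotes the union of a bounded set E with all bounded connected components of its complement. -/
/-!
Let `x ∈ T(U)` with `f x ∉ f(U)`, let `D` be the component of `f x` in the closed set `f(U)ᶜ`,
and put `Z = f⁻¹(D) ⊆ Uᶜ`. The component of `x` in `Z` lies in that of `x` in `Uᶜ`, so it
is compact, and a Šura-Bura type argument yields an open `W ∋ x` with `Z ∩ W` compact. Then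
`f(Z ∩ W) = D ∩ f(W)` is both compact and relatively open in the connected set `D`,
hence equal to `D`, which is therefore bounded.
-/

open Set Metric Filter Bornology Topology

noncomputable section

/-- The topological hull `T(E)`: the union of `E` with all bounded connected
components of its complement. -/
def topHull {m : ℕ} (E : Set (EuclideanSpace ℝ (Fin m))) : Set (EuclideanSpace ℝ (Fin m)) :=
  E ∪ {x | IsBounded (connectedComponentIn Eᶜ x)}

theorem IsClosed.isClosed_connectedComponentIn {X : Type*} [TopologicalSpace X] {F : Set X}
    (hF : IsClosed F) (x : X) : IsClosed (connectedComponentIn F x) := by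
  by_cases hx : x ∈ F
  · exact closure_subset_iff_isClosed.1 <|
      isPreconnected_connectedComponentIn.closure.subset_connectedComponentIn
        (subset_closure (mem_connectedComponentIn hx))
        (closure_minimal (connectedComponentIn_subset F x) hF)
  · rw [connectedComponentIn_eq_empty hx]
    exact isClosed_empty

theorem IsClosed.exists_isClopen_of_disjoint_connectedComponent {X : Type*} [TopologicalSpace X]
    [CompactSpace X] [T2Space X] {S : Set X} (hS : IsClosed S) {x : X}
    (hd : Disjoint (connectedComponent x) S) :
    ∃ F : Set X, IsClopen F ∧ x ∈ F ∧ Disjoint F S := by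
  rw [connectedComponent_eq_iInter_isClopen x] at hd
  obtain ⟨t, ht⟩ := hS.isCompact.elim_finite_subfamily_closed
    (fun s : { s : Set X // IsClopen s ∧ x ∈ s } => (s : Set X)) (fun s => s.2.1.1)
    (disjoint_iff_inter_eq_empty.1 hd.symm)
  refine ⟨⋂ s ∈ t, (s : Set X), isClopen_biInter_finset fun s _ => s.2.1,
    mem_iInter₂.2 fun s _ => s.2.2, ?_⟩
  rw [disjoint_iff_inter_eq_empty, inter_comm, ht]

theorem IsClosed.exists_isOpen_isCompact_inter_of_isCompact_connectedComponentIn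
    {X : Type*} [TopologicalSpace X] [LocallyCompactSpace X] [T2Space X] {Z : Set X}
    (hZ : IsClosed Z) {x : X} (hx : x ∈ Z) (hC : IsCompact (connectedComponentIn Z x)) :
    ∃ W : Set X, IsOpen W ∧ x ∈ W ∧ IsCompact (Z ∩ W) := by
  obtain ⟨N, hN, hCN⟩ := exists_compact_superset hC
  set K := Z ∩ N
  have hK : IsCompact K := hN.inter_left hZ
  have : CompactSpace K := isCompact_iff_compactSpace.1 hK
  have hxK : x ∈ K := ⟨hx, interior_subset (hCN (mem_connectedComponentIn hx))⟩
  have hcomp : connectedComponent (⟨x, hxK⟩ : K) ⊆ ((↑) : K → X) ⁻¹' interior N := by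
    intro y hy
    have hyK : (y : X) ∈ connectedComponentIn K x := by
      rw [connectedComponentIn_eq_image hxK]
      exact mem_image_of_mem _ hy
    exact hCN (connectedComponentIn_mono x inter_subset_left hyK)
  have hS : IsClosed (((↑) : K → X) ⁻¹' (interior N)ᶜ) :=
    isOpen_interior.isClosed_compl.preimage continuous_subtype_val
  obtain ⟨F, hF, hxF, hFS⟩ :=
    hS.exists_isClopen_of_disjoint_connectedComponent (disjoint_compl_right_iff_subset.2 hcomp)
  obtain ⟨V, hV, rfl⟩ := isOpen_induced_iff.1 hF.2
  have hFN : ∀ y : K, (y : X) ∈ V → (y : X) ∈ interior N := fun y hy =>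
    not_not.1 (disjoint_left.1 hFS hy)
  refine ⟨V ∩ interior N, hV.inter isOpen_interior, ⟨hxF, hFN _ hxF⟩, ?_⟩
  have himage : Z ∩ (V ∩ interior N) = (↑) '' ((↑) ⁻¹' V : Set K) := by
    ext z
    constructor
    · rintro ⟨hzZ, hzV, hzN⟩
      exact ⟨⟨z, hzZ, interior_subset hzN⟩, hzV, rfl⟩
    · rintro ⟨y, hyV, rfl⟩
      exact ⟨y.2.1, hyV, hFN y hyV⟩
  rw [himage]
  exact hF.1.isCompact.image continuous_subtype_val

theorem IsPreconnected.subset_image_preimage_inter_of_isCompact {X Y : Type*}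
    [TopologicalSpace X] [TopologicalSpace Y] [T2Space Y] {f : X → Y} (hf : Continuous f)
    (hfo : IsOpenMap f) {D : Set Y} (hD : IsPreconnected D) {W : Set X} (hW : IsOpen W)
    (hK : IsCompact (f ⁻¹' D ∩ W)) (hne : (D ∩ f '' W).Nonempty) :
    D ⊆ f '' (f ⁻¹' D ∩ W) := by
  have himage : f '' (f ⁻¹' D ∩ W) = D ∩ f '' W := image_preimage_inter f W D
  have hclosed : IsClosed (D ∩ f '' W) := himage ▸ (hK.image hf).isClosed
  rw [himage]
  rcases isPreconnected_iff_subset_of_disjoint.1 hD (f '' W) (D ∩ f '' W)ᶜ (hfo W hW)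
      hclosed.isOpen_compl (fun y _ => (em (y ∈ f '' W)).imp id fun h h' => h h'.2)
      (eq_empty_iff_forall_notMem.2 fun _ ⟨hyD, hyW, hy⟩ => hy ⟨hyD, hyW⟩) with h | h
  · exact subset_inter le_rfl h
  · obtain ⟨y, hy⟩ := hne
    exact absurd hy (h hy.1)

theorem hull_image_subset_general {m : ℕ} (f : EuclideanSpace ℝ (Fin m) → EuclideanSpace ℝ (Fin m))
    (hf : Continuous f) (hopen : IsOpenMap f) (U : Set (EuclideanSpace ℝ (Fin m)))
    (hU : IsOpen U) :
    f '' topHull U ⊆ topHull (f '' U) := by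
  rintro _ ⟨x, hx, rfl⟩
  by_cases hfx : f x ∈ f '' U
  · exact Or.inl hfx
  right
  have hxU : x ∉ U := fun h => hfx (mem_image_of_mem f h)
  set D := connectedComponentIn (f '' U)ᶜ (f x)
  set Z := f ⁻¹' D
  have hZ : IsClosed Z :=
    ((hopen U hU).isClosed_compl.isClosed_connectedComponentIn _).preimage hf
  have hZU : Z ⊆ Uᶜ := fun z hz hzU =>
    connectedComponentIn_subset _ _ hz (mem_image_of_mem f hzU)
  have hxZ : x ∈ Z := mem_connectedComponentIn hfx
  have hCZ : IsCompact (connectedComponentIn Z x) :=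
    isCompact_of_isClosed_isBounded (hZ.isClosed_connectedComponentIn x)
      (IsBounded.subset (hx.resolve_left hxU) (connectedComponentIn_mono x hZU))
  obtain ⟨W, hW, hxW, hZW⟩ :=
    hZ.exists_isOpen_isCompact_inter_of_isCompact_connectedComponentIn hxZ hCZ
  have hDsub : D ⊆ f '' (Z ∩ W) :=
    isPreconnected_connectedComponentIn.subset_image_preimage_inter_of_isCompact hf hopen hW
      hZW ⟨f x, mem_connectedComponentIn hfx, mem_image_of_mem f hxW⟩
  exact (hZW.image hf).isBounded.subset hDsub

theorem hull_image_subset {m : ℕ} (f : EuclideanSpace ℝ (Fin m) → EuclideanSpace ℝ (Fin m))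
    (hf : Continuous f) (hopen : IsOpenMap f) (U : Set (EuclideanSpace ℝ (Fin m)))
    (hU : IsOpen U) (hUb : IsBounded U) :
    f '' topHull U ⊆ topHull (f '' U) :=
  hull_image_subset_general f hf hopen U hU
end
end

section
/- Let f : ℝ^m → ℝ^m be a continuous open mapping and U ⊂ ℝ^m a bounded open set. Then ∂T(f(U)) ⊆ f(∂T(U)), where T denotes the topological hull. -/
/-!
The hull of an open set is open, that of a bounded set is bounded, and `∂T(E) ⊆ ∂E` since a
ball in the interior of `Eᶜ` lies in a single component of `Eᶜ`. The key point is
`f(T(U)) ⊆ T(f(U))`. For `p ∈ T(U)` with `f p ∉ f(U)`, the component of `p` in the compact set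
`S = closure T(U) \ f⁻¹(f(U))` lies in a bounded component of `Uᶜ`, hence in `T(U)`. By the
Šura-Bura theorem (in a compact Hausdorff space a component is the intersection of its clopen
neighbourhoods) some open `O ∋ p` inside `T(U)` has `S ∩ O` compact. Then `f(U)ᶜ ∩ f(O)` is compact
and relatively clopen in `f(U)ᶜ`, so it contains the whole component of `f p`, which is therefore
bounded. Finally, a point `y ∈ ∂T(f(U))` lies in `closure f(U) ⊆ f(closure U)`, say `y = f x`, and
`x ∉ T(U)` because `f(T(U))` is an open subset of `T(f(U))`; hence `x ∈ ∂T(U)`.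
-/

open Set Metric Filter Bornology Topology

noncomputable section

section Components

variable {X : Type*} [TopologicalSpace X]

theorem exists_isClopen_mem_subset_of_connectedComponent_subset [T2Space X] [CompactSpace X]
    {x : X} {V : Set X} (hV : IsOpen V) (h : connectedComponent x ⊆ V) :
    ∃ Q : Set X, IsClopen Q ∧ x ∈ Q ∧ Q ⊆ V := by
  rw [connectedComponent_eq_iInter_isClopen] at h
  have hdir : Directed (· ⊇ ·) fun Q : { Q : Set X // IsClopen Q ∧ x ∈ Q } => (Q : Set X) := by
    rintro ⟨Q₁, hQ₁, hx₁⟩ ⟨Q₂, hQ₂, hx₂⟩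
    exact ⟨⟨Q₁ ∩ Q₂, hQ₁.inter hQ₂, hx₁, hx₂⟩, inter_subset_left, inter_subset_right⟩
  have : Nonempty { Q : Set X // IsClopen Q ∧ x ∈ Q } := ⟨⟨univ, isClopen_univ, mem_univ x⟩⟩
  obtain ⟨⟨Q, hQ, hxQ⟩, hQV⟩ := exists_subset_nhds_of_compactSpace hdir (fun Q => Q.2.1.isClosed)
    fun y hy => hV.mem_nhds (h hy)
  exact ⟨Q, hQ, hxQ, hQV⟩

theorem IsCompact.exists_isOpen_isCompact_inter_of_connectedComponentIn_subset [T2Space X]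
    {S V : Set X} (hS : IsCompact S) (hV : IsOpen V) {x : X} (hx : x ∈ S)
    (h : connectedComponentIn S x ⊆ V) :
    ∃ O : Set X, IsOpen O ∧ x ∈ O ∧ O ⊆ V ∧ IsCompact (S ∩ O) := by
  have : CompactSpace S := isCompact_iff_compactSpace.mp hS
  rw [connectedComponentIn_eq_image hx, image_subset_iff] at h
  obtain ⟨Q, hQ, hxQ, hQV⟩ :=
    exists_isClopen_mem_subset_of_connectedComponent_subset (hV.preimage continuous_subtype_val) h
  obtain ⟨O, hO, rfl⟩ := isOpen_induced_iff.mp hQ.isOpen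
  have hSO : S ∩ O ⊆ V := fun y hy => hQV (show (⟨y, hy.1⟩ : S) ∈ Subtype.val ⁻¹' O from hy.2)
  refine ⟨O ∩ V, hO.inter hV, ⟨hxQ, h mem_connectedComponent⟩, inter_subset_right, ?_⟩
  rw [← inter_assoc, inter_eq_left.mpr hSO, ← Subtype.image_preimage_coe]
  exact hQ.isClosed.isCompact.image continuous_subtype_val

theorem connectedComponentIn_subset_inter {F O : Set X} (hO : IsOpen O)
    (hFO : IsClosed (F ∩ O)) {x : X} (hx : x ∈ O) : connectedComponentIn F x ⊆ F ∩ O := by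
  by_cases hxF : x ∈ F
  · have hcover : connectedComponentIn F x ⊆ O ∪ (F ∩ O)ᶜ := fun y _ =>
      (em (y ∈ O)).imp id fun hy h => hy h.2
    have hdisj : connectedComponentIn F x ∩ (O ∩ (F ∩ O)ᶜ) = ∅ := by
      ext y
      simp only [mem_inter_iff, mem_compl_iff, mem_empty_iff_false, iff_false, not_and]
      exact fun hy hyO hFO => hFO (connectedComponentIn_subset F x hy) hyO
    rcases isPreconnected_iff_subset_of_disjoint.mp isPreconnected_connectedComponentIn _ _
      hO hFO.isOpen_compl hcover hdisj with hsub | hsub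
    · exact subset_inter (connectedComponentIn_subset F x) hsub
    · exact absurd ⟨hxF, hx⟩ (hsub (mem_connectedComponentIn hxF))
  · simp [connectedComponentIn_eq_empty hxF]

end Components

theorem not_isBounded_connectedComponentIn_compl {E : Type*} [NormedAddCommGroup E]
    [NormedSpace ℝ E] {s : Set E} {R : ℝ} (hR : 0 ≤ R) (hs : s ⊆ closedBall 0 R) {z : E}
    (hz : R < ‖z‖) : ¬ IsBounded (connectedComponentIn sᶜ z) := by
  have hz₀ : 0 < ‖z‖ := hR.trans_lt hz
  have hnorm : ∀ t ∈ Ici (1 : ℝ), ‖t • z‖ = t * ‖z‖ := fun t ht => by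
    rw [norm_smul, Real.norm_of_nonneg (zero_le_one.trans ht)]
  set ray := (· • z) '' Ici (1 : ℝ)
  have hray : ray ⊆ connectedComponentIn sᶜ z := by
    refine (isPreconnected_Ici.image (· • z) (continuous_id.smul continuous_const).continuousOn)
      |>.subset_connectedComponentIn ⟨1, mem_Ici.mpr le_rfl, one_smul ℝ z⟩ ?_
    rintro _ ⟨t, ht, rfl⟩ hts
    have := mem_closedBall_zero_iff.mp (hs hts)
    rw [hnorm t ht] at this
    nlinarith [mem_Ici.mp ht]
  intro hbdd
  obtain ⟨C, hC⟩ := isBounded_iff_forall_norm_le.mp (hbdd.subset hray)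
  have ht : |C| / ‖z‖ + 1 ∈ Ici (1 : ℝ) := mem_Ici.mpr (by simp; positivity)
  have := hC _ ⟨_, ht, rfl⟩
  rw [hnorm _ ht, add_mul, div_mul_cancel₀ _ hz₀.ne'] at this
  linarith [le_abs_self C]

section TopHull

variable {m : ℕ}

theorem subset_topHull (E : Set (EuclideanSpace ℝ (Fin m))) : E ⊆ topHull E :=
  subset_union_left

theorem topHull_subset_closedBall {E : Set (EuclideanSpace ℝ (Fin m))} {R : ℝ} (hR : 0 ≤ R)
    (hE : E ⊆ closedBall 0 R) : topHull E ⊆ closedBall 0 R := by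
  rintro z (hz | hz)
  · exact hE hz
  · by_contra hzR
    exact not_isBounded_connectedComponentIn_compl hR hE (by simpa using hzR) hz

theorem isBounded_topHull {E : Set (EuclideanSpace ℝ (Fin m))} (hE : IsBounded E) :
    IsBounded (topHull E) := by
  obtain ⟨R, hR, hER⟩ := hE.subset_closedBall_lt 0 0
  exact isBounded_closedBall.subset (topHull_subset_closedBall hR.le hER)

theorem connectedComponentIn_compl_subset_topHull {E : Set (EuclideanSpace ℝ (Fin m))}
    {x : EuclideanSpace ℝ (Fin m)} (hx : x ∈ topHull E) :
    connectedComponentIn Eᶜ x ⊆ topHull E := by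
  rcases hx with hxE | hbdd
  · simp [connectedComponentIn_eq_empty (notMem_compl_iff.mpr hxE)]
  · intro y hy
    exact Or.inr (show IsBounded (connectedComponentIn Eᶜ y) by
      rwa [← connectedComponentIn_eq hy])

theorem subset_topHull_of_isCompact_compl_inter {E O : Set (EuclideanSpace ℝ (Fin m))}
    (hO : IsOpen O) (hEO : IsCompact (Eᶜ ∩ O)) : O ⊆ topHull E := fun _ hw =>
  Or.inr (hEO.isBounded.subset (connectedComponentIn_subset_inter hO hEO.isClosed hw))

theorem isOpen_topHull {U : Set (EuclideanSpace ℝ (Fin m))} (hU : IsOpen U) :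
    IsOpen (topHull U) := by
  refine isOpen_iff_forall_mem_open.mpr fun x hx => ?_
  by_cases hxU : x ∈ U
  · exact ⟨U, subset_topHull U, hU, hxU⟩
  have hbdd : IsBounded (connectedComponentIn Uᶜ x) := hx.resolve_left hxU
  obtain ⟨R, -, hR⟩ := hbdd.subset_ball_lt 0 0
  have hS : IsCompact (Uᶜ ∩ closedBall 0 R) :=
    (isCompact_closedBall 0 R).inter_left hU.isClosed_compl
  obtain ⟨O, hO, hxO, hOR, hSO⟩ := hS.exists_isOpen_isCompact_inter_of_connectedComponentIn_subset
    isOpen_ball ⟨hxU, ball_subset_closedBall (hR (mem_connectedComponentIn hxU))⟩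
    ((connectedComponentIn_mono x inter_subset_left).trans hR)
  rw [inter_assoc, inter_eq_right.mpr (hOR.trans ball_subset_closedBall)] at hSO
  exact ⟨O, subset_topHull_of_isCompact_compl_inter hO hSO, hO, hxO⟩

theorem frontier_topHull_subset (E : Set (EuclideanSpace ℝ (Fin m))) :
    frontier (topHull E) ⊆ frontier E := by
  intro y hy
  by_contra hyE
  have hy' : y ∈ interior Eᶜ := by
    rw [interior_compl]
    exact fun hcl => hyE ⟨hcl, fun hint => hy.2 (interior_mono (subset_topHull E) hint)⟩
  set C := connectedComponentIn (interior Eᶜ) y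
  have hC : IsOpen C := isOpen_interior.connectedComponentIn
  have hCy : y ∈ C := mem_connectedComponentIn hy'
  have hcomp : ∀ b ∈ C, connectedComponentIn Eᶜ b = connectedComponentIn Eᶜ y := fun b hb =>
    (connectedComponentIn_eq (connectedComponentIn_mono y interior_subset hb)).symm
  by_cases hbdd : IsBounded (connectedComponentIn Eᶜ y)
  · refine hy.2 (interior_maximal (fun b hb => Or.inr ?_) hC hCy)
    exact (show IsBounded (connectedComponentIn Eᶜ b) from (hcomp b hb).symm ▸ hbdd)
  · refine (_root_.mem_closure_iff.mp hy.1 C hC hCy).elim fun b ⟨hbC, hbE⟩ => ?_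
    have hbE' : b ∈ Eᶜ := interior_subset (connectedComponentIn_subset _ _ hbC)
    rcases hbE with hb | hb
    exacts [hbE' hb, hbdd (hcomp b hbC ▸ hb)]

theorem image_topHull_subset {f : EuclideanSpace ℝ (Fin m) → EuclideanSpace ℝ (Fin m)}
    (hf : Continuous f) (hopen : IsOpenMap f) {U : Set (EuclideanSpace ℝ (Fin m))}
    (hU : IsOpen U) (hUb : IsBounded U) : f '' topHull U ⊆ topHull (f '' U) := by
  rintro _ ⟨p, hp, rfl⟩
  set F := f ⁻¹' (f '' U)ᶜ
  have hFU : F ⊆ Uᶜ := fun x hxF hxU => hxF ⟨x, hxU, rfl⟩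
  by_cases hpU : f p ∈ f '' U
  · exact Or.inl hpU
  have hS : IsCompact (F ∩ closure (topHull U)) :=
    (isBounded_topHull hUb).isCompact_closure.inter_left
      ((hopen U hU).isClosed_compl.preimage hf)
  have hcomp : connectedComponentIn (F ∩ closure (topHull U)) p ⊆ topHull U :=
    (connectedComponentIn_mono p (inter_subset_left.trans hFU)).trans
      (connectedComponentIn_compl_subset_topHull hp)
  obtain ⟨O, hO, hpO, hOU, hSO⟩ :=
    hS.exists_isOpen_isCompact_inter_of_connectedComponentIn_subset (isOpen_topHull hU)
      ⟨hpU, subset_closure hp⟩ hcomp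
  rw [inter_assoc, inter_eq_right.mpr (hOU.trans subset_closure)] at hSO
  have himage : IsCompact ((f '' U)ᶜ ∩ f '' O) := image_preimage_inter f O _ ▸ hSO.image hf
  exact subset_topHull_of_isCompact_compl_inter (hopen O hO) himage ⟨p, hpO, rfl⟩

end TopHull

theorem frontier_hull_image_subset {m : ℕ}
    (f : EuclideanSpace ℝ (Fin m) → EuclideanSpace ℝ (Fin m))
    (hf : Continuous f) (hopen : IsOpenMap f) (U : Set (EuclideanSpace ℝ (Fin m)))
    (hU : IsOpen U) (hUb : IsBounded U) :
    frontier (topHull (f '' U)) ⊆ f '' frontier (topHull U) := by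
  intro y hy
  have hy_closure : y ∈ closure (f '' U) :=
    frontier_subset_closure (frontier_topHull_subset _ hy)
  obtain ⟨x, hxU, rfl⟩ : y ∈ f '' closure U :=
    closure_minimal (image_mono subset_closure) (hUb.isCompact_closure.image hf).isClosed
      hy_closure
  have hx : x ∉ topHull U := fun hx => hy.2 <|
    interior_maximal (image_topHull_subset hf hopen hU hUb) (hopen _ (isOpen_topHull hU))
      ⟨x, hx, rfl⟩
  rw [(isOpen_topHull hU).frontier_eq]
  exact ⟨x, ⟨closure_mono (subset_topHull U) hxU, hx⟩, rfl⟩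
end
end

section
/- Let E be a closed connected subset of the one-point compactification of ℝ^m containing the point at infinity. Then every connected component of E ∩ ℝ^m is unbounded. -/
open Set Metric Filter Bornology Topology OnePoint

noncomputable section

/-! A bounded component `C` of `E ∩ ℝ^m` has a compact neighbourhood `L` avoiding `∞`. In the
compact Hausdorff space `E ∩ L` the component `C` is the intersection of its clopen
neighbourhoods, so some clopen piece of `E ∩ L` contains `C` and misses the frontier of `L`.
That piece is then closed and open in `E`, contains `C` but not `∞`, contradicting the
connectedness of `E`. -/

theorem exists_isClopen_disjoint_of_disjoint_connectedComponent {X : Type*} [TopologicalSpace X]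
    [T2Space X] [CompactSpace X] {x : X} {F : Set X} (hF : IsClosed F)
    (hxF : Disjoint (connectedComponent x) F) :
    ∃ Z : Set X, IsClopen Z ∧ x ∈ Z ∧ Disjoint Z F := by
  have : Nonempty {s : Set X // IsClopen s ∧ x ∈ s} := ⟨⟨univ, isClopen_univ, mem_univ x⟩⟩
  rw [connectedComponent_eq_iInter_isClopen, disjoint_iff_inter_eq_empty, inter_comm] at hxF
  obtain ⟨⟨Z, hZ, hxZ⟩, hZF⟩ := hF.isCompact.elim_directed_family_closed _
    (fun s => s.2.1.1) hxF
    (fun s t => ⟨⟨s.1 ∩ t.1, s.2.1.inter t.2.1, s.2.2, t.2.2⟩, inter_subset_left,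
      inter_subset_right⟩)
  exact ⟨Z, hZ, hxZ, disjoint_iff_inter_eq_empty.2 (by rwa [inter_comm])⟩

theorem IsCompact.exists_isOpen_isClosed_inter_subset {X : Type*} [TopologicalSpace X]
    [T2Space X] {K V : Set X} {x : X} (hK : IsCompact K) (hV : IsOpen V) (hx : x ∈ K)
    (hKV : connectedComponentIn K x ⊆ V) :
    ∃ O, IsOpen O ∧ x ∈ O ∧ IsClosed (K ∩ O) ∧ K ∩ O ⊆ V := by
  have : CompactSpace K := isCompact_iff_compactSpace.mp hK
  obtain ⟨Z, hZ, hxZ, hZV⟩ := exists_isClopen_disjoint_of_disjoint_connectedComponent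
    (x := ⟨x, hx⟩) (hV.isClosed_compl.preimage continuous_subtype_val) <| by
      rwa [preimage_compl, disjoint_compl_right_iff_subset, ← image_subset_iff,
        ← connectedComponentIn_eq_image hx]
  obtain ⟨O, hO, rfl⟩ := isOpen_induced_iff.mp hZ.2
  refine ⟨O, hO, hxZ, ?_, ?_⟩
  · rw [← Subtype.image_preimage_coe]
    exact (hZ.1.isCompact.image continuous_subtype_val).isClosed
  · rw [← Subtype.image_preimage_coe, image_subset_iff]
    rwa [preimage_compl, disjoint_compl_right_iff_subset] at hZV

theorem subset_of_connectedComponentIn_subset_isCompact {X : Type*}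
    [TopologicalSpace X] [T2Space X] [LocallyCompactSpace X] {E U K : Set X} {x : X}
    (hE : IsPreconnected E) (hEc : IsClosed E) (hU : IsOpen U) (hx : x ∈ E ∩ U)
    (hK : IsCompact K) (hKU : K ⊆ U) (hCK : connectedComponentIn (E ∩ U) x ⊆ K) : E ⊆ U := by
  obtain ⟨L, hL, hKL, hLU⟩ := exists_compact_between hK hU hKU
  have hCL : connectedComponentIn (E ∩ U) x ⊆ interior L := hCK.trans hKL
  have hxL : x ∈ L := interior_subset (hCL (mem_connectedComponentIn hx))
  have hC : connectedComponentIn (E ∩ L) x = connectedComponentIn (E ∩ U) x :=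
    (connectedComponentIn_mono x (inter_subset_inter_right E hLU)).antisymm
      (isPreconnected_connectedComponentIn.subset_connectedComponentIn
        (mem_connectedComponentIn hx)
        (subset_inter ((connectedComponentIn_subset _ _).trans inter_subset_left)
          (hCL.trans interior_subset)))
  obtain ⟨O, hO, hxO, hZ, hZL⟩ := (hL.inter_left hEc).exists_isOpen_isClosed_inter_subset
    isOpen_interior ⟨hx.1, hxL⟩ (hC ▸ hCL)
  -- `E ∩ L ∩ O` is closed, and open in `E` because it equals `E ∩ (interior L ∩ O)`.
  rcases isPreconnected_iff_subset_of_disjoint.1 hE (interior L ∩ O) (E ∩ L ∩ O)ᶜ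
    (isOpen_interior.inter hO) hZ.isOpen_compl
    (fun y _ => by by_cases h : y ∈ E ∩ L ∩ O; exacts [Or.inl ⟨hZL h, h.2⟩, Or.inr h])
    (eq_empty_iff_forall_notMem.2 fun y ⟨hyE, ⟨hyL, hyO⟩, hyZ⟩ =>
      hyZ ⟨⟨hyE, interior_subset hyL⟩, hyO⟩) with h | h
  · exact h.trans (inter_subset_left.trans (interior_subset.trans hLU))
  · exact absurd ⟨⟨hx.1, hxL⟩, hxO⟩ (h hx.1)

theorem Topology.IsInducing.connectedComponentIn_inter_range_subset {X Y : Type*}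
    [TopologicalSpace X] [TopologicalSpace Y] {f : X → Y} (hf : IsInducing f) {s : Set Y}
    {x : X} (hx : f x ∈ s) :
    connectedComponentIn (s ∩ range f) (f x) ⊆ f '' connectedComponentIn (f ⁻¹' s) x := by
  set D := connectedComponentIn (s ∩ range f) (f x)
  have hDf : D ⊆ range f := (connectedComponentIn_subset _ _).trans inter_subset_right
  have hD : IsPreconnected (f ⁻¹' D) := by
    rw [← hf.isPreconnected_image, image_preimage_eq_of_subset hDf]
    exact isPreconnected_connectedComponentIn
  calc D = f '' (f ⁻¹' D) := (image_preimage_eq_of_subset hDf).symm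
    _ ⊆ f '' connectedComponentIn (f ⁻¹' s) x :=
      image_mono <| hD.subset_connectedComponentIn
        (mem_connectedComponentIn (x := f x) ⟨hx, mem_range_self x⟩)
        (preimage_mono ((connectedComponentIn_subset _ _).trans inter_subset_left))

theorem components_unbounded {m : ℕ}
    (E : Set (OnePoint (EuclideanSpace ℝ (Fin m))))
    (hEc : IsClosed E) (hEconn : IsConnected E)
    (hinf : (∞ : OnePoint (EuclideanSpace ℝ (Fin m))) ∈ E)
    (x : EuclideanSpace ℝ (Fin m)) (hx : (x : OnePoint (EuclideanSpace ℝ (Fin m))) ∈ E) :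
    ¬ IsBounded (connectedComponentIn
      {y : EuclideanSpace ℝ (Fin m) | (y : OnePoint (EuclideanSpace ℝ (Fin m))) ∈ E} x) := by
  intro hb
  have hE : E ⊆ range ((↑) : EuclideanSpace ℝ (Fin m) → OnePoint (EuclideanSpace ℝ (Fin m))) :=
    subset_of_connectedComponentIn_subset_isCompact hEconn.isPreconnected hEc isOpen_range_coe
      ⟨hx, mem_range_self x⟩ (hb.isCompact_closure.image continuous_coe)
      (image_subset_range _ _)
      ((isOpenEmbedding_coe.isInducing.connectedComponentIn_inter_range_subset hx).trans
        (image_mono subset_closure))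
  exact infty_notMem_range_coe (hE hinf)
end
end

section
/- Let E be a closed connected subset of the one-point compactification of ℝ^m containing ∞, and let f : ℝ^m → ℝ^m be a continuous open mapping. Then the preimage f⁻¹(E ∩ ℝ^m) = {x ∈ ℝ^m : f(x) ∈ E} has no bounded connected component. -/
/-!
If the component `C` of `x` in the closed set `A = f⁻¹(E)` were bounded, then, since components
of compact Hausdorff spaces are intersections of clopen sets, `C` could be enclosed in a
relatively compact open set `U` whose frontier misses `A`. Then `f(closure U) ∩ E ⊆ f(U)`,
so `E` is covered by the disjoint open sets `f(U)` and `OnePoint ∖ f(closure U)`, which it meets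
in `f x` and in `∞` respectively, contradicting connectedness.
-/

open Set Bornology OnePoint

section Frontier

variable {X : Type*} [TopologicalSpace X]

theorem exists_isClopen_of_connectedComponent_subset [T2Space X] [CompactSpace X]
    {x : X} {U : Set X} (hU : IsOpen U) (h : connectedComponent x ⊆ U) :
    ∃ s, IsClopen s ∧ x ∈ s ∧ s ⊆ U := by
  have hdisj : Uᶜ ∩ ⋂ s : {s : Set X // IsClopen s ∧ x ∈ s}, (s : Set X) = ∅ := by
    rw [← connectedComponent_eq_iInter_isClopen]
    exact eq_empty_of_forall_notMem fun z hz => hz.1 (h hz.2)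
  obtain ⟨u, hu⟩ :=
    hU.isClosed_compl.isCompact.elim_finite_subfamily_closed _ (fun s => s.2.1.isClosed) hdisj
  refine ⟨⋂ s ∈ u, (s : Set X), isClopen_biInter_finset fun s _ => s.2.1,
    mem_iInter₂.2 fun s _ => s.2.2, fun z hz => ?_⟩
  by_contra hzU
  exact (eq_empty_iff_forall_notMem.mp hu z) ⟨hzU, hz⟩

theorem IsCompact.exists_isOpen_inter_subset_of_connectedComponentIn_subset [T2Space X]
    {B U : Set X} {x : X} (hB : IsCompact B) (hx : x ∈ B) (hU : IsOpen U)
    (h : connectedComponentIn B x ⊆ U) :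
    ∃ V, IsOpen V ∧ x ∈ V ∧ IsCompact (B ∩ V) ∧ B ∩ V ⊆ U := by
  have : CompactSpace B := isCompact_iff_compactSpace.mp hB
  obtain ⟨s, hs, hxs, hsU⟩ := exists_isClopen_of_connectedComponent_subset
    (x := (⟨x, hx⟩ : B)) (hU.preimage continuous_subtype_val)
    fun z hz => h (connectedComponentIn_eq_image hx ▸ mem_image_of_mem _ hz)
  obtain ⟨V, hV, rfl⟩ := isOpen_induced_iff.mp hs.isOpen
  refine ⟨V, hV, hxs, ?_, ?_⟩ <;> rw [← Subtype.image_preimage_coe]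
  · exact hs.isClosed.isCompact.image continuous_subtype_val
  · exact image_subset_iff.2 hsU

theorem IsCompact.exists_isOpen_superset_disjoint_frontier [LocallyCompactSpace X] [RegularSpace X]
    {A W : Set X} (hK : IsCompact (A ∩ W)) (hW : IsOpen W) :
    ∃ U, IsOpen U ∧ IsCompact (closure U) ∧ A ∩ W ⊆ U ∧ Disjoint (frontier U) A := by
  obtain ⟨U, hU, hKU, hUW, hUc⟩ :=
    exists_open_between_and_isCompact_closure hK hW inter_subset_right
  refine ⟨U, hU, hUc, hKU, disjoint_left.2 fun z hz hzA => hz.2 ?_⟩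
  rw [hU.interior_eq]
  exact hKU ⟨hzA, hUW hz.1⟩

theorem IsClosed.exists_isOpen_mem_disjoint_frontier [T2Space X] [LocallyCompactSpace X]
    {A : Set X} {x : X} (hA : IsClosed A) (hx : x ∈ A)
    (hC : IsCompact (closure (connectedComponentIn A x))) :
    ∃ U, IsOpen U ∧ IsCompact (closure U) ∧ x ∈ U ∧ Disjoint (frontier U) A := by
  obtain ⟨W, hW, hCW, -, hWc⟩ :=
    exists_open_between_and_isCompact_closure hC isOpen_univ (subset_univ _)
  have hxW : x ∈ W := hCW (subset_closure (mem_connectedComponentIn hx))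
  obtain ⟨V, hV, hxV, hBV, hBVW⟩ :=
    (hWc.inter_left hA).exists_isOpen_inter_subset_of_connectedComponentIn_subset
      ⟨hx, subset_closure hxW⟩ hW
      ((connectedComponentIn_mono x inter_subset_left).trans (subset_closure.trans hCW))
  have hAVW : A ∩ (V ∩ W) = A ∩ closure W ∩ V := by
    ext z
    exact ⟨fun ⟨hzA, hzV, hzW⟩ => ⟨⟨hzA, subset_closure hzW⟩, hzV⟩,
      fun hz => ⟨hz.1.1, hz.2, hBVW hz⟩⟩
  obtain ⟨U, hU, hUc, hAU, hfr⟩ :=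
    (hAVW ▸ hBV).exists_isOpen_superset_disjoint_frontier (hV.inter hW)
  exact ⟨U, hU, hUc, hAU ⟨hx, hxV, hxW⟩, hfr⟩

end Frontier

theorem IsPreconnected.disjoint_preimage_coe_of_infty_mem {Y : Type*} [TopologicalSpace Y]
    [T2Space Y] {E : Set (OnePoint Y)} (hE : IsPreconnected E) (hinf : ∞ ∈ E) {O K : Set Y}
    (hO : IsOpen O) (hK : IsCompact K) (hOK : O ⊆ K) (hEK : (↑) ⁻¹' E ∩ K ⊆ O) :
    Disjoint ((↑) ⁻¹' E) O := by
  refine disjoint_left.2 fun y hyE hyO => ?_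
  have hcover : E ⊆ (↑) '' O ∪ ((↑) '' K)ᶜ := by
    intro e he
    by_cases heK : e ∈ (↑) '' K
    · obtain ⟨z, hz, rfl⟩ := heK
      exact Or.inl ⟨z, hEK ⟨he, hz⟩, rfl⟩
    · exact Or.inr heK
  obtain ⟨e, -, heO, heK⟩ := hE _ _ (isOpenEmbedding_coe.isOpenMap _ hO)
    (isOpen_compl_image_coe.2 ⟨hK.isClosed, hK⟩) hcover ⟨↑y, hyE, y, hyO, rfl⟩
    ⟨∞, hinf, infty_notMem_image_coe⟩
  exact heK (image_mono hOK heO)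

theorem preimage_no_bounded_component {m : ℕ}
    (E : Set (OnePoint (EuclideanSpace ℝ (Fin m))))
    (hEc : IsClosed E) (hEconn : IsConnected E)
    (hinf : (∞ : OnePoint (EuclideanSpace ℝ (Fin m))) ∈ E)
    (f : EuclideanSpace ℝ (Fin m) → EuclideanSpace ℝ (Fin m))
    (hf : Continuous f) (hopen : IsOpenMap f)
    (x : EuclideanSpace ℝ (Fin m))
    (hx : x ∈ {y : EuclideanSpace ℝ (Fin m) | (f y : OnePoint (EuclideanSpace ℝ (Fin m))) ∈ E}) :
    ¬ IsBounded (connectedComponentIn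
      {y : EuclideanSpace ℝ (Fin m) | (f y : OnePoint (EuclideanSpace ℝ (Fin m))) ∈ E} x) := by
  intro hbdd
  have hA : IsClosed {y | (f y : OnePoint (EuclideanSpace ℝ (Fin m))) ∈ E} :=
    hEc.preimage (continuous_coe.comp hf)
  obtain ⟨U, hU, hUc, hxU, hfr⟩ := hA.exists_isOpen_mem_disjoint_frontier hx hbdd.isCompact_closure
  have hEfU : (↑) ⁻¹' E ∩ f '' closure U ⊆ f '' U := by
    rintro _ ⟨hzE, z, hz, rfl⟩
    rcases closure_eq_self_union_frontier U ▸ hz with hzU | hzfr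
    · exact mem_image_of_mem f hzU
    · exact absurd hzE (disjoint_left.1 hfr hzfr)
  exact (hEconn.isPreconnected.disjoint_preimage_coe_of_infty_mem hinf (hopen U hU)
    (hUc.image hf) (image_mono subset_closure) hEfU).ne_of_mem hx (mem_image_of_mem f hxU) rfl
end

section
/- Let 0 < ρ < 1, r₁ > 1 and r_n = r₁^{2^{n-1}}. The set A = ⋃_{n≥1} [r_n^{1+ρ}, r_n²] has lower logarithmic density at least (1−ρ)/(1+ρ), i.e., liminf_{r→∞} (1/log r) ∫_{A ∩ [1,r]} dt/t ≥ (1−ρ)/(1+ρ). -/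
/-!
In logarithmic scale, with `L = log r₁`, the set `A` consists of the intervals
`[(1 + ρ) 2ᵏ L, 2ᵏ⁺¹ L]` of length `(1 - ρ) 2ᵏ L`. If `2ᴹ L ≤ log x ≤ 2ᴹ⁺¹ L`, the first `M`
of them contribute `(1 - ρ)(2ᴹ - 1) L`, and once `log x` passes `(1 + ρ) 2ᴹ L` the `M`-th one
adds `log x - (1 + ρ) 2ᴹ L`. Either way the total is at least
`(1 - ρ)/(1 + ρ) · log x - (1 - ρ) L`, the worst case being `log x = (1 + ρ) 2ᴹ L`.
-/

open Set Filter MeasureTheory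

noncomputable section

open Real Function

lemma integral_Icc_one_div {a b : ℝ} (ha : 0 < a) (hab : a ≤ b) :
    ∫ t in Icc a b, 1 / t = log b - log a := by
  have h0 : (0 : ℝ) ∉ uIcc a b := by
    rw [uIcc_of_le hab]
    exact fun h => (ha.trans_le h.1).false
  rw [integral_Icc_eq_integral_Ioc, ← intervalIntegral.integral_of_le hab, integral_one_div h0,
    log_div (ha.trans_le hab).ne' ha.ne']

lemma integrableOn_one_div_Icc {a : ℝ} (ha : 0 < a) (b : ℝ) :
    IntegrableOn (fun t : ℝ => 1 / t) (Icc a b) :=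
  (continuousOn_const.div continuousOn_id fun _ ht => (ha.trans_le ht.1).ne').integrableOn_Icc

lemma setIntegral_one_div_mono {a b : ℝ} {s t : Set ℝ} (ha : 0 < a) (hst : s ⊆ t)
    (ht : t ⊆ Icc a b) : ∫ x in s, 1 / x ≤ ∫ x in t, 1 / x := by
  refine setIntegral_mono_set ((integrableOn_one_div_Icc ha b).mono_set ht) ?_ hst.eventuallyLE
  refine ae_restrict_of_ae_restrict_of_subset ht ?_
  filter_upwards [ae_restrict_mem measurableSet_Icc] with x hx
  exact one_div_nonneg.2 (ha.le.trans hx.1)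

def logAverage (A : Set ℝ) (x : ℝ) : ℝ := (1 / log x) * ∫ t in A ∩ Icc 1 x, 1 / t

lemma logAverage_le_one (A : Set ℝ) {x : ℝ} (hx : 1 < x) : logAverage A x ≤ 1 := by
  have h := setIntegral_one_div_mono one_pos (inter_subset_right (s := A)) (subset_refl (Icc 1 x))
  rw [integral_Icc_one_div one_pos hx.le, log_one, sub_zero] at h
  rw [logAverage, one_div_mul_eq_div, div_le_one (log_pos hx)]
  exact h

/-- With `L = log r₁`, `logBlock ρ L k` is the interval `[r_{k+1}^{1+ρ}, r_{k+1}²]`. -/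
def logBlock (ρ L : ℝ) (k : ℕ) : Set ℝ :=
  Icc (exp ((1 + ρ) * 2 ^ k * L)) (exp (2 ^ (k + 1) * L))

section logBlock

variable {ρ L : ℝ}

lemma logBlock_log_eq {r : ℝ} (hr : 0 < r) (k : ℕ) :
    logBlock ρ (log r) k = Icc ((r ^ 2 ^ k) ^ (1 + ρ)) ((r ^ 2 ^ k) ^ 2) := by
  have hrk : 0 < r ^ 2 ^ k := pow_pos hr _
  rw [logBlock, rpow_def_of_pos hrk, ← exp_log (pow_pos hrk 2)]
  simp only [log_pow]
  push_cast
  ring_nf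

lemma pairwise_disjoint_logBlock (hρ : 0 < ρ) (hL : 0 < L) :
    Pairwise (Disjoint on (logBlock ρ L)) := by
  refine (pairwise_disjoint_on _).2 fun i j hij => Set.disjoint_left.2 fun t hi hj => ?_
  have h2 : (2 : ℝ) ^ (i + 1) * L ≤ 2 ^ j * L :=
    mul_le_mul_of_nonneg_right (pow_le_pow_right₀ one_le_two hij) hL.le
  have hρL : 0 < ρ * 2 ^ j * L := by positivity
  have hlt : 2 ^ (i + 1) * L < (1 + ρ) * 2 ^ j * L := by linarith
  exact (exp_lt_exp.2 hlt).not_ge (hj.1.trans hi.2)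

lemma integral_logBlock (hρ : ρ ≤ 1) (hL : 0 ≤ L) (k : ℕ) :
    ∫ t in logBlock ρ L k, 1 / t = (1 - ρ) * 2 ^ k * L := by
  have hle : (1 + ρ) * 2 ^ k * L ≤ 2 ^ (k + 1) * L := by
    have h : 0 ≤ (1 - ρ) * 2 ^ k * L := by have := sub_nonneg.2 hρ; positivity
    rw [pow_succ]; linarith
  rw [logBlock, integral_Icc_one_div (exp_pos _) (exp_le_exp.2 hle), log_exp, log_exp, pow_succ]
  ring

lemma integral_biUnion_logBlock (hρ0 : 0 < ρ) (hρ1 : ρ ≤ 1) (hL : 0 < L) (M : ℕ) :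
    ∫ t in ⋃ k ∈ Finset.range M, logBlock ρ L k, 1 / t = (1 - ρ) * (2 ^ M - 1) * L := by
  rw [integral_biUnion_finset (s := logBlock ρ L) _ (fun _ _ => measurableSet_Icc)
    ((pairwise_disjoint_logBlock hρ0 hL).set_pairwise _)
    (fun _ _ => integrableOn_one_div_Icc (exp_pos _) _)]
  simp_rw [integral_logBlock hρ1 hL.le]
  induction M with
  | zero => simp
  | succ M ih => rw [Finset.sum_range_succ, ih, pow_succ]; ring

lemma biUnion_logBlock_subset (hρ : 0 ≤ ρ) (hL : 0 ≤ L) (M : ℕ) :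
    ⋃ k ∈ Finset.range M, logBlock ρ L k ⊆ Icc 1 (exp (2 ^ M * L)) := by
  simp only [iUnion_subset_iff, Finset.mem_range]
  intro k hk t ht
  refine ⟨(one_le_exp (by positivity)).trans ht.1, ht.2.trans (exp_le_exp.2 ?_)⟩
  exact mul_le_mul_of_nonneg_right (pow_le_pow_right₀ one_le_two hk) hL

end logBlock

section lowerBound

variable {ρ L : ℝ} {A : Set ℝ}

lemma sub_le_integral_of_logBlock_subset (hρ0 : 0 < ρ) (hρ1 : ρ ≤ 1) (hL : 0 < L)
    (hA : ∀ k, logBlock ρ L k ⊆ A) {u : ℝ} {M : ℕ} (hMu : 2 ^ M * L ≤ u)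
    (huM : u ≤ 2 ^ (M + 1) * L) :
    (1 - ρ) / (1 + ρ) * u - (1 - ρ) * L ≤ ∫ t in A ∩ Icc 1 (exp u), 1 / t := by
  set B := ⋃ k ∈ Finset.range M, logBlock ρ L k
  have hBsub := biUnion_logBlock_subset hρ0.le hL.le M
  have hB : B ⊆ A ∩ Icc 1 (exp u) := fun t ht =>
    ⟨iUnion₂_subset (fun k _ => hA k) ht, Icc_subset_Icc_right (exp_le_exp.2 hMu) (hBsub ht)⟩
  have hmono : ∀ s ⊆ A ∩ Icc 1 (exp u), ∫ t in s, 1 / t ≤ ∫ t in A ∩ Icc 1 (exp u), 1 / t :=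
    fun s hs => setIntegral_one_div_mono one_pos hs inter_subset_right
  have hBint := integral_biUnion_logBlock hρ0 hρ1 hL M
  have hρ : 0 < 1 + ρ := by linarith
  set v := u / (1 + ρ)
  have hcu : (1 - ρ) / (1 + ρ) * u = (1 - ρ) * v := by ring
  have huv : u = (1 + ρ) * v := (mul_div_cancel₀ u hρ.ne').symm
  rcases le_total v (2 ^ M * L) with hv | hv
  · have := hmono B hB
    rw [hBint] at this
    nlinarith
  · set a := (1 + ρ) * 2 ^ M * L
    have hau : a ≤ u := by nlinarith
    have hI : Icc (exp a) (exp u) ⊆ A ∩ Icc 1 (exp u) := fun t ht =>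
      ⟨hA M ⟨ht.1, ht.2.trans (exp_le_exp.2 huM)⟩, (one_le_exp (by positivity)).trans ht.1, ht.2⟩
    have hdisj : Disjoint B (Icc (exp a) (exp u)) := by
      have hρM : 0 < ρ * 2 ^ M * L := by positivity
      exact Set.disjoint_left.2 fun t htB htI =>
        (exp_lt_exp.2 (by linarith : 2 ^ M * L < a)).not_ge (htI.1.trans (hBsub htB).2)
    have := hmono _ (union_subset hB hI)
    rw [setIntegral_union hdisj measurableSet_Icc
      ((integrableOn_one_div_Icc one_pos _).mono_set hBsub) (integrableOn_one_div_Icc (exp_pos a) _),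
      hBint, integral_Icc_one_div (exp_pos a) (exp_le_exp.2 hau), log_exp, log_exp] at this
    nlinarith [mul_nonneg hρ0.le (sub_nonneg.2 hv)]

theorem le_liminf_logAverage_of_logBlock_subset (hρ0 : 0 < ρ) (hρ1 : ρ ≤ 1) (hL : 0 < L)
    (hA : ∀ k, logBlock ρ L k ⊆ A) :
    (1 - ρ) / (1 + ρ) ≤ liminf (logAverage A) atTop := by
  set c := (1 - ρ) / (1 + ρ)
  have hlower : ∀ᶠ x in atTop, c - (1 - ρ) * L / log x ≤ logAverage A x := by
    filter_upwards [eventually_ge_atTop (exp L)] with x hx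
    have hx0 : 0 < x := (exp_pos L).trans_le hx
    have hLx : L ≤ log x := by simpa using log_le_log (exp_pos L) hx
    have hlog : 0 < log x := hL.trans_le hLx
    obtain ⟨M, hM, hM'⟩ := exists_nat_pow_near ((one_le_div hL).2 hLx) one_lt_two
    have h := sub_le_integral_of_logBlock_subset hρ0 hρ1 hL hA ((le_div_iff₀ hL).1 hM)
      ((div_lt_iff₀ hL).1 hM').le
    rw [exp_log hx0] at h
    calc c - (1 - ρ) * L / log x = 1 / log x * (c * log x - (1 - ρ) * L) := by field_simp
      _ ≤ logAverage A x := mul_le_mul_of_nonneg_left h (by positivity)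
  have htends : Tendsto (fun x => c - (1 - ρ) * L / log x) atTop (nhds c) := by
    simpa using tendsto_const_nhds.sub (tendsto_const_nhds.div_atTop tendsto_log_atTop)
  have hcobdd : IsCoboundedUnder (· ≥ ·) atTop (logAverage A) :=
    (isBoundedUnder_of_eventually_le (a := 1)
      ((eventually_gt_atTop 1).mono fun _ hx => logAverage_le_one A hx)).isCoboundedUnder_ge
  calc c = liminf (fun x => c - (1 - ρ) * L / log x) atTop := htends.liminf_eq.symm
    _ ≤ liminf (logAverage A) atTop := liminf_le_liminf hlower htends.isBoundedUnder_ge hcobdd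

end lowerBound

theorem lower_log_density {ρ r₁ : ℝ} (hρ0 : 0 < ρ) (hρ1 : ρ < 1) (hr₁ : 1 < r₁)
    (r : ℕ → ℝ) (hr : ∀ n ≥ 1, r n = r₁ ^ (2 ^ (n - 1) : ℕ))
    (A : Set ℝ) (hA : A = ⋃ n ∈ Ici 1, Icc ((r n) ^ ((1 : ℝ) + ρ)) ((r n) ^ 2)) :
    (1 - ρ) / (1 + ρ) ≤
      Filter.liminf (fun x : ℝ => (1 / Real.log x) * ∫ t in A ∩ Icc 1 x, 1 / t) atTop := by
  have hblock : ∀ k, logBlock ρ (log r₁) k ⊆ A := by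
    intro k
    have hrk : r (k + 1) = r₁ ^ 2 ^ k := by simpa using hr (k + 1) le_add_self
    rw [hA, logBlock_log_eq (by linarith), ← hrk]
    exact subset_biUnion_of_mem (u := fun n => Icc ((r n) ^ ((1 : ℝ) + ρ)) ((r n) ^ 2))
      (mem_Ici.2 le_add_self)
  exact le_liminf_logAverage_of_logBlock_subset hρ0 hρ1.le (log_pos hr₁) hblock
end
end
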